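/- For α ≥ 0, the integral ∫_0^α x²·Φ(τx)·φ(x) dx equals I₁(α) − α·φ(α)·Φ(τα) + ρσ·(φ(0)² − φ(α)·φ(τα)), where I₁(α) = Φ(α) − 1/2 − [Φ₂(α, 0; ρ) − Φ₂(0, 0; ρ)], σ = 1/√(1+τ²), and ρ = τσ. -/

import Mathlib

/-!
Since `d/dx [φ(x) φ(τx)] = -(1 + τ²) x φ(x) φ(τx)`, the function
`-x φ(x) Φ(τx) - τ/(1+τ²) · φ(x) φ(τx)` is a primitive of `(x² - 1) Φ(τx) φ(x)`, which
reduces the integral to `∫₀^α Φ(τx) φ(x) dx` (and `ρσ = τ/(1+τ²)`). Completing the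
square factors the bivariate density as `φ(x) · σ⁻¹ φ((y - ρx)/σ)`, so
`Φ₂(a, 0; ρ) = ∫_{-∞}^a Φ(-τx) φ(x) dx`; with `Φ(-τx) = 1 - Φ(τx)` this identifies
`∫₀^α Φ(τx) φ(x) dx` with `I₁(α)`.
-/

open MeasureTheory

/-- Standard normal pdf. -/
noncomputable def gpdf (x : ℝ) : ℝ := (Real.sqrt (2 * Real.pi))⁻¹ * Real.exp (-x ^ 2 / 2)

/-- Standard normal cdf. -/
noncomputable def gcdf (x : ℝ) : ℝ := ∫ t in Set.Iic x, gpdf t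

/-- Bivariate standard normal density with correlation ρ. -/
noncomputable def bvpdf (ρ x y : ℝ) : ℝ :=
  (2 * Real.pi * Real.sqrt (1 - ρ ^ 2))⁻¹ *
    Real.exp (-(x ^ 2 - 2 * ρ * x * y + y ^ 2) / (2 * (1 - ρ ^ 2)))

/-- Bivariate standard normal cdf Φ₂(a, b; ρ). -/
noncomputable def bvcdf (ρ a b : ℝ) : ℝ :=
  ∫ x in Set.Iic a, ∫ y in Set.Iic b, bvpdf ρ x y

open Real ProbabilityTheory

lemma gpdf_eq_gaussianPDFReal : gpdf = gaussianPDFReal 0 1 := by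
  ext x
  simp [gpdf, gaussianPDFReal]

lemma continuous_gpdf : Continuous gpdf := by
  unfold gpdf; fun_prop

lemma integrable_gpdf : Integrable gpdf :=
  gpdf_eq_gaussianPDFReal ▸ integrable_gaussianPDFReal 0 1

lemma gpdf_nonneg (x : ℝ) : 0 ≤ gpdf x :=
  gpdf_eq_gaussianPDFReal ▸ gaussianPDFReal_nonneg 0 1 x

lemma integral_gpdf : ∫ x, gpdf x = 1 :=
  gpdf_eq_gaussianPDFReal ▸ integral_gaussianPDFReal_eq_one 0 one_ne_zero

lemma gpdf_neg (x : ℝ) : gpdf (-x) = gpdf x := by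
  simp [gpdf]

lemma hasDerivAt_gpdf (x : ℝ) : HasDerivAt gpdf (-x * gpdf x) x := by
  have h_exponent : HasDerivAt (fun y : ℝ => -y ^ 2 / 2) (-x) x :=
    ((hasDerivAt_pow 2 x).neg.div_const 2).congr_deriv (by norm_num; ring)
  exact (h_exponent.exp.const_mul (√(2 * π))⁻¹).congr_deriv (by rw [gpdf]; ring)

lemma gcdf_sub_gcdf (a b : ℝ) : gcdf b - gcdf a = ∫ x in a..b, gpdf x :=
  intervalIntegral.integral_Iic_sub_Iic integrable_gpdf.integrableOn integrable_gpdf.integrableOn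

lemma hasDerivAt_gcdf (x : ℝ) : HasDerivAt gcdf (gpdf x) x := by
  have h : gcdf = fun u => gcdf 0 + ∫ t in (0 : ℝ)..u, gpdf t := by
    funext u; rw [← gcdf_sub_gcdf]; ring
  rw [h]
  exact (intervalIntegral.integral_hasDerivAt_right integrable_gpdf.intervalIntegrable
    (continuous_gpdf.stronglyMeasurableAtFilter _ _) continuous_gpdf.continuousAt).const_add _

lemma continuous_gcdf : Continuous gcdf :=
  continuous_iff_continuousAt.2 fun x => (hasDerivAt_gcdf x).continuousAt

lemma gcdf_nonneg (x : ℝ) : 0 ≤ gcdf x :=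
  setIntegral_nonneg measurableSet_Iic fun t _ => gpdf_nonneg t

lemma gcdf_le_one (x : ℝ) : gcdf x ≤ 1 :=
  integral_gpdf ▸ setIntegral_le_integral integrable_gpdf (.of_forall gpdf_nonneg)

lemma gcdf_neg (x : ℝ) : gcdf (-x) = 1 - gcdf x := by
  have h_refl : gcdf (-x) = ∫ t in Set.Ioi x, gpdf t := by
    rw [gcdf]
    simpa only [gpdf_neg, neg_neg] using integral_comp_neg_Iic (-x) gpdf
  have h_total : gcdf x + ∫ t in Set.Ioi x, gpdf t = 1 :=
    integral_gpdf ▸ intervalIntegral.integral_Iic_add_Ioi integrable_gpdf.integrableOn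
      integrable_gpdf.integrableOn
  linarith

lemma gcdf_zero : gcdf 0 = 1 / 2 := by
  linarith [neg_zero (G := ℝ) ▸ gcdf_neg 0]

lemma setIntegral_Iic_gpdf_div {σ : ℝ} (hσ : 0 < σ) (c b : ℝ) :
    ∫ y in Set.Iic b, gpdf ((y - c) / σ) = σ * gcdf ((b - c) / σ) := by
  have h_ind : (Set.Iic b).indicator (fun y => gpdf ((y - c) / σ))
      = fun y => (Set.Iic ((b - c) / σ)).indicator gpdf ((y - c) / σ) := by
    ext y
    simp only [Set.indicator, Set.mem_Iic, div_le_div_iff_of_pos_right hσ, sub_le_sub_iff_right]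
  rw [← integral_indicator measurableSet_Iic, h_ind,
    integral_sub_right_eq_self (fun y => (Set.Iic ((b - c) / σ)).indicator gpdf (y / σ)) c,
    Measure.integral_comp_div, integral_indicator measurableSet_Iic, abs_of_pos hσ, smul_eq_mul]
  rfl

lemma integrable_gcdf_comp_mul_gpdf {f : ℝ → ℝ} (hf : Continuous f) :
    Integrable (fun x => gcdf (f x) * gpdf x) :=
  integrable_gpdf.bdd_mul (continuous_gcdf.comp hf).aestronglyMeasurable (c := 1)
    (.of_forall fun x => by
      rw [norm_of_nonneg (gcdf_nonneg _)]; exact gcdf_le_one _)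

lemma bvpdf_eq_gpdf_mul {ρ : ℝ} (hρ : ρ ^ 2 < 1) (x y : ℝ) :
    bvpdf ρ x y = gpdf x * ((√(1 - ρ ^ 2))⁻¹ * gpdf ((y - ρ * x) / √(1 - ρ ^ 2))) := by
  have hpos : 0 < 1 - ρ ^ 2 := by linarith
  have hσ : 0 < √(1 - ρ ^ 2) := sqrt_pos.2 hpos
  have hσ_sq : √(1 - ρ ^ 2) ^ 2 = 1 - ρ ^ 2 := sq_sqrt hpos.le
  have h2π : √(2 * π) * √(2 * π) = 2 * π := mul_self_sqrt (by positivity)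
  have h_exponent : -(x ^ 2 - 2 * ρ * x * y + y ^ 2) / (2 * (1 - ρ ^ 2))
      = -x ^ 2 / 2 + -((y - ρ * x) / √(1 - ρ ^ 2)) ^ 2 / 2 := by
    rw [div_pow, hσ_sq]
    field_simp
    ring
  rw [bvpdf, h_exponent, exp_add, ← h2π]
  simp only [gpdf]
  field_simp

lemma bvcdf_eq_setIntegral {ρ : ℝ} (hρ : ρ ^ 2 < 1) (a b : ℝ) :
    bvcdf ρ a b = ∫ x in Set.Iic a, gcdf ((b - ρ * x) / √(1 - ρ ^ 2)) * gpdf x := by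
  have hσ : 0 < √(1 - ρ ^ 2) := sqrt_pos.2 (by linarith)
  refine setIntegral_congr_fun measurableSet_Iic fun x _ => ?_
  simp only [bvpdf_eq_gpdf_mul hρ, integral_const_mul, setIntegral_Iic_gpdf_div hσ]
  field_simp

lemma bvcdf_zero_eq_setIntegral (τ a : ℝ) :
    bvcdf (τ * (1 / √(1 + τ ^ 2))) a 0 = ∫ x in Set.Iic a, gcdf (-(τ * x)) * gpdf x := by
  set ρ := τ * (1 / √(1 + τ ^ 2)) with hρ_def
  have hρ_sq : 1 - ρ ^ 2 = (1 / √(1 + τ ^ 2)) ^ 2 := by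
    simp only [ρ, mul_pow, div_pow, sq_sqrt (by positivity : (0 : ℝ) ≤ 1 + τ ^ 2)]
    field_simp
    ring
  have hρ : ρ ^ 2 < 1 := by
    have : 0 < (1 / √(1 + τ ^ 2)) ^ 2 := by positivity
    linarith
  have h_arg (x : ℝ) : (0 - ρ * x) / √(1 - ρ ^ 2) = -(τ * x) := by
    rw [hρ_sq, sqrt_sq (by positivity), hρ_def]
    field_simp
    ring
  simp only [bvcdf_eq_setIntegral hρ, h_arg]

lemma gcdf_sub_half_sub_bvcdf (τ a : ℝ) :
    gcdf a - 1 / 2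
        - (bvcdf (τ * (1 / √(1 + τ ^ 2))) a 0 - bvcdf (τ * (1 / √(1 + τ ^ 2))) 0 0) =
      ∫ x in (0 : ℝ)..a, gcdf (τ * x) * gpdf x := by
  have h_int : Integrable fun x => gcdf (-(τ * x)) * gpdf x :=
    integrable_gcdf_comp_mul_gpdf (by fun_prop)
  rw [bvcdf_zero_eq_setIntegral, bvcdf_zero_eq_setIntegral,
    intervalIntegral.integral_Iic_sub_Iic h_int.integrableOn h_int.integrableOn,
    ← gcdf_zero, gcdf_sub_gcdf,
    ← intervalIntegral.integral_sub integrable_gpdf.intervalIntegrable h_int.intervalIntegrable]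
  refine intervalIntegral.integral_congr fun x _ => ?_
  simp only [gcdf_neg]
  ring

lemma hasDerivAt_gpdf_mul_gpdf_comp_mul (τ x : ℝ) :
    HasDerivAt (fun y => gpdf y * gpdf (τ * y))
      (-(1 + τ ^ 2) * x * (gpdf x * gpdf (τ * x))) x := by
  have h := (hasDerivAt_gpdf x).mul
    ((hasDerivAt_gpdf (τ * x)).comp x ((hasDerivAt_id x).const_mul τ))
  exact h.congr_deriv (by simp only [Function.comp_apply]; ring)

lemma hasDerivAt_mul_gpdf_mul_gcdf_comp_mul (τ x : ℝ) :
    HasDerivAt (fun y => y * gpdf y * gcdf (τ * y))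
      ((1 - x ^ 2) * gpdf x * gcdf (τ * x) + τ * x * (gpdf x * gpdf (τ * x))) x := by
  have h := ((hasDerivAt_id x).mul (hasDerivAt_gpdf x)).mul
    ((hasDerivAt_gcdf (τ * x)).comp x ((hasDerivAt_id x).const_mul τ))
  exact h.congr_deriv (by simp only [Function.comp_apply, Pi.mul_apply, id]; ring)

lemma integral_sq_mul_gcdf_comp_mul_mul_gpdf (τ a b : ℝ) :
    ∫ x in a..b, x ^ 2 * gcdf (τ * x) * gpdf x =
      (∫ x in a..b, gcdf (τ * x) * gpdf x)
        - (b * gpdf b * gcdf (τ * b) - a * gpdf a * gcdf (τ * a))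
        - τ / (1 + τ ^ 2) * (gpdf b * gpdf (τ * b) - gpdf a * gpdf (τ * a)) := by
  have hF (x : ℝ) : HasDerivAt
      (fun y => -(y * gpdf y * gcdf (τ * y)) - τ / (1 + τ ^ 2) * (gpdf y * gpdf (τ * y)))
      (x ^ 2 * gcdf (τ * x) * gpdf x - gcdf (τ * x) * gpdf x) x := by
    refine ((hasDerivAt_mul_gpdf_mul_gcdf_comp_mul τ x).neg.sub
      ((hasDerivAt_gpdf_mul_gpdf_comp_mul τ x).const_mul _)).congr_deriv ?_
    field_simp
    ring
  have h_cont : Continuous fun x => gcdf (τ * x) * gpdf x :=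
    (continuous_gcdf.comp (by fun_prop)).mul continuous_gpdf
  have h_int : IntervalIntegrable (fun x => x ^ 2 * gcdf (τ * x) * gpdf x) volume a b :=
    (((continuous_pow 2).mul (continuous_gcdf.comp (by fun_prop))).mul
      continuous_gpdf).intervalIntegrable a b
  have h_ftc := intervalIntegral.integral_eq_sub_of_hasDerivAt (fun x _ => hF x)
    (h_int.sub (h_cont.intervalIntegrable a b))
  rw [intervalIntegral.integral_sub h_int (h_cont.intervalIntegrable a b)] at h_ftc
  linarith

theorem stmt12_general (α τ : ℝ) :
    let σ : ℝ := 1 / Real.sqrt (1 + τ ^ 2)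
    let ρ : ℝ := τ * σ
    let I₁ : ℝ := gcdf α - 1 / 2 - (bvcdf ρ α 0 - bvcdf ρ 0 0)
    (∫ x in (0 : ℝ)..α, x ^ 2 * gcdf (τ * x) * gpdf x) =
      I₁ - α * gpdf α * gcdf (τ * α) + ρ * σ * (gpdf 0 ^ 2 - gpdf α * gpdf (τ * α)) := by
  intro σ ρ I₁
  have hρσ : ρ * σ = τ / (1 + τ ^ 2) := by
    simp only [ρ, σ]
    field_simp
    rw [sq_sqrt (by positivity)]
  rw [hρσ, show I₁ = _ from gcdf_sub_half_sub_bvcdf τ α,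
    integral_sq_mul_gcdf_comp_mul_mul_gpdf]
  simp only [mul_zero, zero_mul, sub_zero]
  ring

/-- For α ≥ 0, τ ∈ ℝ, σ = 1/√(1+τ²), ρ = τσ,
∫₀^α x²Φ(τx)φ(x)dx = I₁(α) − αφ(α)Φ(τα) + ρσ(φ(0)² − φ(α)φ(τα)), where
I₁(α) = Φ(α) − 1/2 − (Φ₂(α,0;ρ) − Φ₂(0,0;ρ)). -/
theorem stmt12 (α τ : ℝ) (hα : 0 ≤ α) :
    let σ : ℝ := 1 / Real.sqrt (1 + τ ^ 2)
    let ρ : ℝ := τ * σ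
    let I₁ : ℝ := gcdf α - 1 / 2 - (bvcdf ρ α 0 - bvcdf ρ 0 0)
    (∫ x in (0 : ℝ)..α, x ^ 2 * gcdf (τ * x) * gpdf x) =
      I₁ - α * gpdf α * gcdf (τ * α) + ρ * σ * (gpdf 0 ^ 2 - gpdf α * gpdf (τ * α)) :=
  stmt12_general α τ
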